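/- arXiv:2204.11423 — 5 statements merged into one kernel-verified Lean document; each statement's English description precedes it below -/
import Mathlib

section
/- Let M¹ = (b¹, u¹) and M² = (b², u²) be subjective opinions over K classes whose conflict C satisfies C < 1. Then their reduced Dempster combination (b, u) is again a subjective opinion: b k ≥ 0 for every k, u ≥ 0, and u + ∑_k b k = 1. -/
open Finset

/-- The conflict between two belief-mass assignments: `C = ∑_{i ≠ j} b₁ i * b₂ j`. -/
noncomputable def conflict {K : ℕ} (b₁ b₂ : Fin K → ℝ) : ℝ :=
  ∑ i, ∑ j ∈ univ.filter (fun j => j ≠ i), b₁ i * b₂ j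

/-- The belief masses of the reduced Dempster combination:
`b k = (b¹ k * b² k + b¹ k * u² + b² k * u¹) / (1 − C)`. -/
noncomputable def combBelief {K : ℕ} (b₁ b₂ : Fin K → ℝ) (u₁ u₂ : ℝ) (k : Fin K) : ℝ :=
  (b₁ k * b₂ k + b₁ k * u₂ + b₂ k * u₁) / (1 - conflict b₁ b₂)

/-- The uncertainty mass of the reduced Dempster combination: `u = u¹ * u² / (1 − C)`. -/
noncomputable def combUncertainty {K : ℕ} (b₁ b₂ : Fin K → ℝ) (u₁ u₂ : ℝ) : ℝ :=
  (u₁ * u₂) / (1 - conflict b₁ b₂)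

/-! The numerators of the combination add up to `1 - C`: expanding
`1 = (u¹ + ∑ b¹) (u² + ∑ b²)`, the off-diagonal products `b¹ i * b² j` make up exactly `C`,
and everything else is a numerator term. Dividing by `1 - C > 0` normalises the masses. -/

theorem conflict_eq_sum_mul_sum_sub_sum_mul {K : ℕ} (b₁ b₂ : Fin K → ℝ) :
    conflict b₁ b₂ = (∑ k, b₁ k) * (∑ k, b₂ k) - ∑ k, b₁ k * b₂ k := by
  have hfilter : ∀ i : Fin K, univ.filter (fun j => j ≠ i) = univ.erase i := fun i => by
    ext j; simp
  simp_rw [conflict, hfilter, ← mul_sum, sum_erase_eq_sub (mem_univ _), mul_sub,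
    sum_sub_distrib, ← sum_mul]

theorem mul_add_sum_eq_one_sub_conflict {K : ℕ} {b₁ b₂ : Fin K → ℝ}
    {u₁ u₂ : ℝ} (hs₁ : u₁ + ∑ k, b₁ k = 1) (hs₂ : u₂ + ∑ k, b₂ k = 1) :
    u₁ * u₂ + ∑ k, (b₁ k * b₂ k + b₁ k * u₂ + b₂ k * u₁) = 1 - conflict b₁ b₂ := by
  rw [conflict_eq_sum_mul_sum_sub_sum_mul]
  simp only [sum_add_distrib, ← sum_mul]
  linear_combination (u₂ + ∑ k, b₂ k) * hs₁ + hs₂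

theorem comb_isOpinion_general (K : ℕ)
    (b₁ b₂ : Fin K → ℝ) (u₁ u₂ : ℝ)
    (hb₁ : ∀ k, 0 ≤ b₁ k) (hu₁ : 0 ≤ u₁) (hs₁ : u₁ + ∑ k, b₁ k = 1)
    (hb₂ : ∀ k, 0 ≤ b₂ k) (hu₂ : 0 ≤ u₂) (hs₂ : u₂ + ∑ k, b₂ k = 1)
    (hC : conflict b₁ b₂ < 1) :
    (∀ k, 0 ≤ combBelief b₁ b₂ u₁ u₂ k) ∧ 0 ≤ combUncertainty b₁ b₂ u₁ u₂ ∧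
      combUncertainty b₁ b₂ u₁ u₂ + ∑ k, combBelief b₁ b₂ u₁ u₂ k = 1 := by
  have hpos : 0 < 1 - conflict b₁ b₂ := sub_pos.mpr hC
  refine ⟨fun k => ?_, ?_, ?_⟩
  · have := hb₁ k; have := hb₂ k
    unfold combBelief; positivity
  · unfold combUncertainty; positivity
  · unfold combUncertainty combBelief
    rw [← sum_div, ← add_div, mul_add_sum_eq_one_sub_conflict hs₁ hs₂, div_self hpos.ne']

/-- the reduced Dempster combination of two subjective opinions with
conflict `C < 1` is again a subjective opinion. -/
theorem comb_isOpinion (K : ℕ) (hK : 1 ≤ K)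
    (b₁ b₂ : Fin K → ℝ) (u₁ u₂ : ℝ)
    (hb₁ : ∀ k, 0 ≤ b₁ k) (hu₁ : 0 ≤ u₁) (hs₁ : u₁ + ∑ k, b₁ k = 1)
    (hb₂ : ∀ k, 0 ≤ b₂ k) (hu₂ : 0 ≤ u₂) (hs₂ : u₂ + ∑ k, b₂ k = 1)
    (hC : conflict b₁ b₂ < 1) :
    (∀ k, 0 ≤ combBelief b₁ b₂ u₁ u₂ k) ∧ 0 ≤ combUncertainty b₁ b₂ u₁ u₂ ∧
      combUncertainty b₁ b₂ u₁ u₂ + ∑ k, combBelief b₁ b₂ u₁ u₂ k = 1 :=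
  comb_isOpinion_general K b₁ b₂ u₁ u₂ hb₁ hu₁ hs₁ hb₂ hu₂ hs₂ hC
end

section
/- (Proposition 3.2, main bound) Let Mᵒ = (bᵒ, uᵒ) and Mᵃ = (bᵃ, uᵃ) be subjective opinions over K classes whose conflict C satisfies C < 1, let (b, u) be their reduced Dempster combination, and fix t : Fin K. Then bᵒ t − b t ≤ bᵒ t * (1 − uᵃ) * (1 + uᵒ) / (1 + uᵒ − uᵃ * uᵒ). (When uᵃ < 1 this upper bound equals bᵒ t * (1 + uᵒ) / (1/(1 − uᵃ) + uᵒ).) -/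
/-! Dropping the nonnegative terms `bᵒ t bᵃ t` and `bᵃ t uᵒ` from the numerator gives
`b t ≥ bᵒ t uᵃ / (1 − C)`. Expanding `(uᵒ + ∑ bᵒ)(uᵃ + ∑ bᵃ) = 1` shows
`1 − C = uᵒ + uᵃ − uᵒ uᵃ + ∑ bᵒ i bᵃ i`, and since `bᵒ i ≤ 1` the agreement `∑ bᵒ i bᵃ i` is at
most `∑ bᵃ i = 1 − uᵃ`, so `1 − C ≤ 1 + uᵒ − uᵃ uᵒ`. Hence
`bᵒ t − b t ≤ bᵒ t (1 − uᵃ / (1 + uᵒ − uᵃ uᵒ))`, which is the bound. -/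

open Finset

structure IsOpinion {K : ℕ} (b : Fin K → ℝ) (u : ℝ) : Prop where
  belief_nonneg : ∀ k, 0 ≤ b k
  uncertainty_nonneg : 0 ≤ u
  add_sum_eq_one : u + ∑ k, b k = 1

theorem conflict_add_sum_mul {K : ℕ} (b₁ b₂ : Fin K → ℝ) :
    conflict b₁ b₂ + ∑ i, b₁ i * b₂ i = (∑ i, b₁ i) * ∑ j, b₂ j := by
  rw [conflict, ← sum_add_distrib, sum_mul]
  refine sum_congr rfl fun i _ => ?_
  rw [mul_sum, filter_ne', sum_erase_add _ _ (mem_univ i)]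

namespace IsOpinion

variable {K : ℕ} {b b₁ b₂ : Fin K → ℝ} {u u₁ u₂ : ℝ}

theorem sum_belief (h : IsOpinion b u) : ∑ k, b k = 1 - u := by
  linarith [h.add_sum_eq_one]

theorem uncertainty_le_one (h : IsOpinion b u) : u ≤ 1 := by
  linarith [h.sum_belief, sum_nonneg fun k (_ : k ∈ univ) => h.belief_nonneg k]

theorem belief_le_one (h : IsOpinion b u) (k : Fin K) : b k ≤ 1 := by
  linarith [h.sum_belief, h.uncertainty_nonneg,
    single_le_sum (fun j (_ : j ∈ univ) => h.belief_nonneg j) (mem_univ k)]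

theorem one_sub_conflict_eq (h₁ : IsOpinion b₁ u₁) (h₂ : IsOpinion b₂ u₂) :
    1 - conflict b₁ b₂ = u₁ + u₂ - u₁ * u₂ + ∑ i, b₁ i * b₂ i := by
  have := conflict_add_sum_mul b₁ b₂
  rw [h₁.sum_belief, h₂.sum_belief] at this
  linarith

theorem one_sub_conflict_le (h₁ : IsOpinion b₁ u₁) (h₂ : IsOpinion b₂ u₂) :
    1 - conflict b₁ b₂ ≤ 1 + u₁ - u₂ * u₁ := by
  have hagree : ∑ i, b₁ i * b₂ i ≤ ∑ i, b₂ i :=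
    sum_le_sum fun i _ => mul_le_of_le_one_left (h₂.belief_nonneg i) (h₁.belief_le_one i)
  linarith [h₁.one_sub_conflict_eq h₂, h₂.sum_belief]

theorem mul_div_le_combBelief (h₁ : IsOpinion b₁ u₁) (h₂ : IsOpinion b₂ u₂)
    (hC : conflict b₁ b₂ < 1) (k : Fin K) :
    b₁ k * u₂ / (1 - conflict b₁ b₂) ≤ combBelief b₁ b₂ u₁ u₂ k := by
  have hbb := mul_nonneg (h₁.belief_nonneg k) (h₂.belief_nonneg k)
  have hbu := mul_nonneg (h₂.belief_nonneg k) h₁.uncertainty_nonneg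
  exact div_le_div_of_nonneg_right (by linarith) (by linarith)

end IsOpinion

theorem comb_belief_degradation_bound_general (K : ℕ)
    (bo ba : Fin K → ℝ) (uo ua : ℝ)
    (hbo : ∀ k, 0 ≤ bo k) (huo : 0 ≤ uo) (hso : uo + ∑ k, bo k = 1)
    (hba : ∀ k, 0 ≤ ba k) (hua : 0 ≤ ua) (hsa : ua + ∑ k, ba k = 1)
    (hC : conflict bo ba < 1) (t : Fin K) :
    bo t - combBelief bo ba uo ua t ≤
      bo t * (1 - ua) * (1 + uo) / (1 + uo - ua * uo) := by
  have ho : IsOpinion bo uo := ⟨hbo, huo, hso⟩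
  have ha : IsOpinion ba ua := ⟨hba, hua, hsa⟩
  have hD : 0 < 1 + uo - ua * uo := by nlinarith [ha.uncertainty_le_one]
  have hlower : bo t * ua / (1 + uo - ua * uo) ≤ combBelief bo ba uo ua t :=
    (div_le_div_of_nonneg_left (mul_nonneg (hbo t) hua) (by linarith)
      (ho.one_sub_conflict_le ha)).trans (ho.mul_div_le_combBelief ha hC t)
  calc bo t - combBelief bo ba uo ua t ≤ bo t - bo t * ua / (1 + uo - ua * uo) := by linarith
    _ = bo t * (1 - ua) * (1 + uo) / (1 + uo - ua * uo) := by field_simp; ring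

/-- Proposition 3.2, main bound: the possible degradation of the belief in
class `t` caused by integrating the additional opinion is bounded by
`bᵒ t * (1 − uᵃ) * (1 + uᵒ) / (1 + uᵒ − uᵃ * uᵒ)`. -/
theorem comb_belief_degradation_bound (K : ℕ) (hK : 1 ≤ K)
    (bo ba : Fin K → ℝ) (uo ua : ℝ)
    (hbo : ∀ k, 0 ≤ bo k) (huo : 0 ≤ uo) (hso : uo + ∑ k, bo k = 1)
    (hba : ∀ k, 0 ≤ ba k) (hua : 0 ≤ ua) (hsa : ua + ∑ k, ba k = 1)
    (hC : conflict bo ba < 1) (t : Fin K) :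
    bo t - combBelief bo ba uo ua t ≤
      bo t * (1 - ua) * (1 + uo) / (1 + uo - ua * uo) :=
  comb_belief_degradation_bound_general K bo ba uo ua hbo huo hso hba hua hsa hC t
end

section
/- (Proposition 3.3) Let Mᵒ = (bᵒ, uᵒ) and Mᵃ = (bᵃ, uᵃ) be subjective opinions over K classes whose conflict C satisfies C < 1, and let (b, u) be their reduced Dempster combination. Then u ≤ uᵒ: integrating another opinion does not increase the uncertainty mass. -/
open Finset

/-! The conflict is the off-diagonal part of `(∑ b₁) * (∑ b₂)`, so for nonnegative masses it is at
most that product, hence at most `∑ b₂ = 1 - u₂`. This is exactly the bound `u₂ ≤ 1 - C` that makes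
`u₁ * u₂ / (1 - C) ≤ u₁`. -/

theorem conflict_eq_sum_mul_sum_sub {K : ℕ} (b₁ b₂ : Fin K → ℝ) :
    conflict b₁ b₂ = (∑ i, b₁ i) * (∑ j, b₂ j) - ∑ k, b₁ k * b₂ k := by
  rw [conflict, sum_mul_sum, eq_sub_iff_add_eq, ← sum_add_distrib]
  refine sum_congr rfl fun i _ => ?_
  rw [← sum_filter_add_sum_filter_not univ (fun j => j ≠ i)]
  simp [filter_eq']

theorem conflict_le_sum_mul_sum {K : ℕ} {b₁ b₂ : Fin K → ℝ} (hb₁ : ∀ k, 0 ≤ b₁ k)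
    (hb₂ : ∀ k, 0 ≤ b₂ k) : conflict b₁ b₂ ≤ (∑ i, b₁ i) * (∑ j, b₂ j) := by
  rw [conflict_eq_sum_mul_sum_sub, sub_le_self_iff]
  exact sum_nonneg fun k _ => mul_nonneg (hb₁ k) (hb₂ k)

theorem conflict_le_sum_right {K : ℕ} {b₁ b₂ : Fin K → ℝ} (hb₁ : ∀ k, 0 ≤ b₁ k)
    (hs₁ : ∑ k, b₁ k ≤ 1) (hb₂ : ∀ k, 0 ≤ b₂ k) : conflict b₁ b₂ ≤ ∑ k, b₂ k :=
  (conflict_le_sum_mul_sum hb₁ hb₂).trans <|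
    mul_le_of_le_one_left (sum_nonneg fun k _ => hb₂ k) hs₁

theorem combUncertainty_le_left {K : ℕ} {b₁ b₂ : Fin K → ℝ} {u₁ u₂ : ℝ} (hu₁ : 0 ≤ u₁)
    (hC : conflict b₁ b₂ < 1) (hu₂ : u₂ ≤ 1 - conflict b₁ b₂) :
    combUncertainty b₁ b₂ u₁ u₂ ≤ u₁ := by
  rw [combUncertainty, div_le_iff₀ (sub_pos.mpr hC)]
  exact mul_le_mul_of_nonneg_left hu₂ hu₁

theorem comb_uncertainty_le_general (K : ℕ)
    (bo ba : Fin K → ℝ) (uo ua : ℝ)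
    (hbo : ∀ k, 0 ≤ bo k) (huo : 0 ≤ uo) (hso : uo + ∑ k, bo k = 1)
    (hba : ∀ k, 0 ≤ ba k) (hsa : ua + ∑ k, ba k = 1)
    (hC : conflict bo ba < 1) :
    combUncertainty bo ba uo ua ≤ uo := by
  have hCa : conflict bo ba ≤ ∑ k, ba k := conflict_le_sum_right hbo (by linarith) hba
  exact combUncertainty_le_left huo hC (by linarith)

/-- Proposition 3.3: integrating another opinion does not increase the
uncertainty mass: `u ≤ uᵒ`. -/
theorem comb_uncertainty_le (K : ℕ) (hK : 1 ≤ K)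
    (bo ba : Fin K → ℝ) (uo ua : ℝ)
    (hbo : ∀ k, 0 ≤ bo k) (huo : 0 ≤ uo) (hso : uo + ∑ k, bo k = 1)
    (hba : ∀ k, 0 ≤ ba k) (hua : 0 ≤ ua) (hsa : ua + ∑ k, ba k = 1)
    (hC : conflict bo ba < 1) :
    combUncertainty bo ba uo ua ≤ uo :=
  comb_uncertainty_le_general K bo ba uo ua hbo huo hso hba hsa hC
end

section
/- (Proposition 3.3, generalization to multiple opinions) Let M¹, …, Mᴹ (with M ≥ 1) be subjective opinions over K classes, and form the iterated reduced Dempster combination M = (…((M¹ ⊕ M²) ⊕ M³) ⊕ …) ⊕ Mᴹ, assuming that at each of the M − 1 combination steps the conflict of the two opinions being combined is strictly less than 1. Then the uncertainty u of M satisfies u ≤ uᵐ for every m ∈ {1, …, M}, where uᵐ is the uncertainty of Mᵐ. -/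
open Finset

/-- An opinion datum over `K` classes: a pair (belief masses, uncertainty mass). -/
abbrev Opinion (K : ℕ) := (Fin K → ℝ) × ℝ

/-- The reduced Dempster combination `M¹ ⊕ M²`. -/
noncomputable def comb {K : ℕ} (M₁ M₂ : Opinion K) : Opinion K :=
  (fun k => (M₁.1 k * M₂.1 k + M₁.1 k * M₂.2 + M₂.1 k * M₁.2) / (1 - conflict M₁.1 M₂.1),
    (M₁.2 * M₂.2) / (1 - conflict M₁.1 M₂.1))

/-- The iterated (left-associated) combination `(⋯((M¹ ⊕ M²) ⊕ M³) ⊕ ⋯) ⊕ Mᴹ`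
of `M = n + 1` opinions. -/
noncomputable def iterComb {K : ℕ} : (n : ℕ) → (Fin (n + 1) → Opinion K) → Opinion K
  | 0, f => f 0
  | n + 1, f => comb (iterComb n (fun i => f i.castSucc)) (f (Fin.last (n + 1)))

/-! Since `1 - C = u₁ + u₂ - u₁ u₂ + ∑ₖ b₁ₖ b₂ₖ` for subjective opinions, a single combination
step with `C < 1` yields a subjective opinion whose uncertainty `u₁ u₂ / (1 - C)` is at most
both `u₁` and `u₂`; induction along the iteration gives the bound for every factor. -/

structure Opinion.IsSubjective {K : ℕ} (M : Opinion K) : Prop where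
  belief_nonneg : ∀ k, 0 ≤ M.1 k
  uncertainty_nonneg : 0 ≤ M.2
  uncertainty_add_sum_belief : M.2 + ∑ k, M.1 k = 1

namespace Opinion.IsSubjective

variable {K : ℕ} {M : Opinion K}

theorem sum_belief (hM : M.IsSubjective) : ∑ k, M.1 k = 1 - M.2 := by
  linarith [hM.uncertainty_add_sum_belief]

theorem uncertainty_le_one (hM : M.IsSubjective) : M.2 ≤ 1 := by
  have := Finset.sum_nonneg fun k (_ : k ∈ univ) => hM.belief_nonneg k
  linarith [hM.sum_belief]

end Opinion.IsSubjective

section Combination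

variable {K : ℕ}

theorem conflict_eq (b₁ b₂ : Fin K → ℝ) :
    conflict b₁ b₂ = (∑ i, b₁ i) * (∑ j, b₂ j) - ∑ i, b₁ i * b₂ i := by
  have row (i : Fin K) :
      ∑ j ∈ univ.filter (fun j => j ≠ i), b₁ i * b₂ j = b₁ i * ((∑ j, b₂ j) - b₂ i) := by
    rw [← Finset.mul_sum, Finset.filter_ne', Finset.sum_erase_eq_sub (mem_univ i)]
  simp_rw [conflict, row, mul_sub, Finset.sum_sub_distrib, ← Finset.sum_mul]

theorem one_sub_conflict_eq {M₁ M₂ : Opinion K} (h₁ : M₁.IsSubjective) (h₂ : M₂.IsSubjective) :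
    1 - conflict M₁.1 M₂.1 = M₁.2 + M₂.2 - M₁.2 * M₂.2 + ∑ k, M₁.1 k * M₂.1 k := by
  rw [conflict_eq, h₁.sum_belief, h₂.sum_belief]
  ring

theorem conflict_comm (b₁ b₂ : Fin K → ℝ) : conflict b₁ b₂ = conflict b₂ b₁ := by
  simp only [conflict_eq, mul_comm]

theorem comb_comm (M₁ M₂ : Opinion K) : comb M₁ M₂ = comb M₂ M₁ := by
  ext k <;> simp only [comb, conflict_comm M₁.1] <;> ring

theorem isSubjective_comb {M₁ M₂ : Opinion K} (h₁ : M₁.IsSubjective)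
    (h₂ : M₂.IsSubjective) (hC : conflict M₁.1 M₂.1 < 1) : (comb M₁ M₂).IsSubjective := by
  have hD : 0 < 1 - conflict M₁.1 M₂.1 := by linarith
  have hu₁ := h₁.uncertainty_nonneg
  have hu₂ := h₂.uncertainty_nonneg
  refine ⟨fun k => ?_, by simp only [comb]; positivity, ?_⟩
  · have hb₁ := h₁.belief_nonneg k
    have hb₂ := h₂.belief_nonneg k
    simp only [comb]
    positivity
  · simp only [comb]
    rw [← Finset.sum_div, ← add_div, div_eq_one_iff_eq hD.ne', Finset.sum_add_distrib,
      Finset.sum_add_distrib, ← Finset.sum_mul, ← Finset.sum_mul, h₁.sum_belief,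
      h₂.sum_belief, one_sub_conflict_eq h₁ h₂]
    ring

/-- Multiplying out, the claim is `0 ≤ u₁ (u₁ (1 - u₂) + ∑ₖ b₁ₖ b₂ₖ)`. -/
theorem comb_uncertainty_le_left {M₁ M₂ : Opinion K} (h₁ : M₁.IsSubjective)
    (h₂ : M₂.IsSubjective) (hC : conflict M₁.1 M₂.1 < 1) : (comb M₁ M₂).2 ≤ M₁.2 := by
  have hP : 0 ≤ ∑ k, M₁.1 k * M₂.1 k :=
    Finset.sum_nonneg fun k _ => mul_nonneg (h₁.belief_nonneg k) (h₂.belief_nonneg k)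
  have hu₁ := h₁.uncertainty_nonneg
  have hu₂ := h₂.uncertainty_le_one
  rw [comb, div_le_iff₀ (by linarith), one_sub_conflict_eq h₁ h₂]
  nlinarith [mul_nonneg hu₁ hP, mul_nonneg (mul_nonneg hu₁ hu₁) (sub_nonneg.2 hu₂)]

theorem comb_uncertainty_le_right {M₁ M₂ : Opinion K} (h₁ : M₁.IsSubjective)
    (h₂ : M₂.IsSubjective) (hC : conflict M₁.1 M₂.1 < 1) : (comb M₁ M₂).2 ≤ M₂.2 := by
  rw [comb_comm]
  exact comb_uncertainty_le_left h₂ h₁ (by rwa [conflict_comm])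

end Combination

section Iteration

variable {K : ℕ}

def ConflictLtOneAtEachStep {n : ℕ} (f : Fin (n + 1) → Opinion K) : Prop :=
  ∀ m : ℕ, (hm : m < n) →
    conflict (iterComb m (fun i => f (Fin.castLE (Nat.succ_le_succ hm.le) i))).1
      (f ⟨m + 1, Nat.succ_lt_succ hm⟩).1 < 1

namespace ConflictLtOneAtEachStep

variable {n : ℕ} {f : Fin (n + 2) → Opinion K}

theorem init (hf : ConflictLtOneAtEachStep f) :
    ConflictLtOneAtEachStep (fun i : Fin (n + 1) => f i.castSucc) :=
  fun m hm => hf m (by omega)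

theorem last (hf : ConflictLtOneAtEachStep f) :
    conflict (iterComb n (fun i => f i.castSucc)).1 (f (Fin.last (n + 1))).1 < 1 :=
  hf n (by omega)

end ConflictLtOneAtEachStep

theorem isSubjective_iterComb {n : ℕ} {f : Fin (n + 1) → Opinion K}
    (hf : ∀ m, (f m).IsSubjective) (hC : ConflictLtOneAtEachStep f) :
    (iterComb n f).IsSubjective := by
  induction n with
  | zero => exact hf 0
  | succ n ih =>
    exact isSubjective_comb (ih (fun m => hf _) hC.init) (hf _) hC.last

theorem uncertainty_iterComb_le {n : ℕ} {f : Fin (n + 1) → Opinion K}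
    (hf : ∀ m, (f m).IsSubjective) (hC : ConflictLtOneAtEachStep f) (m : Fin (n + 1)) :
    (iterComb n f).2 ≤ (f m).2 := by
  induction n with
  | zero => rw [Fin.fin_one_eq_zero m]; rfl
  | succ n ih =>
    have hinit := isSubjective_iterComb (fun m => hf m.castSucc) hC.init
    induction m using Fin.lastCases with
    | last => exact comb_uncertainty_le_right hinit (hf _) hC.last
    | cast i =>
      exact (comb_uncertainty_le_left hinit (hf _) hC.last).trans
        (ih (fun m => hf _) hC.init i)

end Iteration

/-- Proposition 3.3, generalization to multiple opinions: if at each of the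
combination steps the conflict of the two opinions being combined is `< 1`, then the
uncertainty of the iterated combination is at most the uncertainty of every single opinion. -/
theorem iterComb_uncertainty_le (K n : ℕ)
    (f : Fin (n + 1) → Opinion K)
    (hb : ∀ m, ∀ k, 0 ≤ (f m).1 k) (hu : ∀ m, 0 ≤ (f m).2)
    (hsum : ∀ m, (f m).2 + ∑ k, (f m).1 k = 1)
    (hconf : ∀ m : ℕ, (hm : m < n) →
      conflict (iterComb m (fun i => f (Fin.castLE (by omega) i))).1
        (f ⟨m + 1, by omega⟩).1 < 1) :
    ∀ m, (iterComb n f).2 ≤ (f m).2 :=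
  uncertainty_iterComb_le (fun m => ⟨hb m, hu m, hsum m⟩) hconf
end

section
/- (Equation 8: KL divergence from a Dirichlet to the uniform Dirichlet) Fix K : ℕ with K ≥ 2 and α : Fin K → ℝ with α k > 0 for all k. Let 𝟙 : Fin K → ℝ denote the constant function 1, so that f_𝟙 x = Real.Gamma K (a constant) is the density of Dir(1, …, 1). Then ∫_D f_α x * log (f_α x / f_𝟙 x) dx = log (Real.Gamma (∑_k α k) / (Real.Gamma K * ∏_k Real.Gamma (α k))) + ∑_k (α k − 1) * (ψ (α k) − ψ (∑_j α j)), where the integral is the Lebesgue integral over D ⊆ ℝ^(K−1). -/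
open MeasureTheory Finset

/-- The domain `D ⊆ ℝ^(K−1)` of the first `K − 1` coordinates of the probability simplex. -/
def simplexDomain (K : ℕ) : Set (Fin (K - 1) → ℝ) :=
  {x | (∀ i, 0 ≤ x i) ∧ ∑ i, x i ≤ 1}

/-- The class probabilities: `μ k x = x k` for `k < K − 1` and `μ (K−1) x = 1 − ∑ i, x i`. -/
noncomputable def dirMu (K : ℕ) (k : Fin K) (x : Fin (K - 1) → ℝ) : ℝ :=
  if h : (k : ℕ) < K - 1 then x ⟨k, h⟩ else 1 - ∑ i, x i

/-- The Dirichlet density with parameter `α` (in the coordinates `x ∈ D`). -/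
noncomputable def dirDensity (K : ℕ) (α : Fin K → ℝ) (x : Fin (K - 1) → ℝ) : ℝ :=
  (Real.Gamma (∑ k, α k) / ∏ k, Real.Gamma (α k)) * ∏ k, dirMu K k x ^ (α k - 1)

/-- The digamma function `ψ s = (log ∘ Γ)' s`. -/
noncomputable def digamma (s : ℝ) : ℝ := deriv (fun t => Real.log (Real.Gamma t)) s

/-!
Write `f_α = B(α)⁻¹ ∏ₖ μₖ ^ (αₖ - 1)` with the multivariate Beta function
`B(α) = ∏ₖ Γ(αₖ) / Γ(∑ₖ αₖ)`; the uniform density is the constant `Γ(K)`. Off the boundary of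
the simplex, a null set, `log (f_α / f_𝟙) = log (1 / (Γ(K) B(α))) + ∑ₖ (αₖ - 1) log μₖ`, so the
divergence is `log (1 / (Γ(K) B(α))) + ∑ₖ (αₖ - 1) E_α[log μₖ]`.

The Dirichlet integral `∫_{c D} ∏ₖ μₖ ^ (αₖ - 1) = c ^ (∑ₖ αₖ - 1) B(α)` over the simplex of
total mass `c` follows by induction on the dimension: slicing off the first coordinate `t` leaves
a simplex of mass `c - t`, and the remaining integral in `t` is a Beta integral. Differentiating
it in `αₖ` under the integral sign gives `E_α[log μₖ] = ∂ log B(α) / ∂αₖ = ψ(αₖ) - ψ(∑ⱼ αⱼ)`;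
the derivative `μₖ ^ (b - 1) log μₖ` is dominated near `b = αₖ` because `x ^ ε |log x|` is
bounded on `(0, 1]`.
-/

open Set Real ProbabilityTheory
open scoped ENNReal

theorem hasDerivAt_Gamma_mul_digamma {s : ℝ} (hs : 0 < s) :
    HasDerivAt Gamma (Gamma s * digamma s) s := by
  have hΓ : DifferentiableAt ℝ Gamma s :=
    differentiableAt_Gamma fun m h => by linarith [h ▸ hs, (Nat.cast_nonneg m : (0 : ℝ) ≤ m)]
  have hlog : digamma s = (Gamma s)⁻¹ * deriv Gamma s :=
    ((hasDerivAt_log (Gamma_pos_of_pos hs).ne').comp s hΓ.hasDerivAt).deriv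
  rw [hlog, ← mul_assoc, mul_inv_cancel₀ (Gamma_pos_of_pos hs).ne', one_mul]
  exact hΓ.hasDerivAt

theorem rpow_mul_abs_log_le {x b e ε : ℝ} (hx0 : 0 < x) (hx1 : x ≤ 1) (hε : 0 < ε)
    (h : e + ε ≤ b) : x ^ b * |log x| ≤ ε⁻¹ * x ^ e := by
  have hlog : |log x| ≤ ε⁻¹ * x ^ (-ε) := by
    rw [abs_of_nonpos (log_nonpos hx0.le hx1), ← log_inv]
    calc log x⁻¹ ≤ x⁻¹ ^ ε / ε := log_le_rpow_div (inv_nonneg.2 hx0.le) hε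
      _ = ε⁻¹ * x ^ (-ε) := by rw [inv_rpow hx0.le, ← rpow_neg hx0.le]; ring
  calc x ^ b * |log x| ≤ x ^ (e + ε) * (ε⁻¹ * x ^ (-ε)) :=
        mul_le_mul (rpow_le_rpow_of_exponent_ge hx0 hx1 h) hlog (abs_nonneg _)
          (rpow_nonneg hx0.le _)
    _ = ε⁻¹ * x ^ e := by rw [mul_left_comm, ← rpow_add hx0, add_neg_cancel_right]

theorem lintegral_eq_mul_lintegral_comp_mul_left {f : ℝ → ℝ≥0∞} (hf : Measurable f) {c : ℝ}
    (hc : 0 < c) :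
    ∫⁻ x, f x = ENNReal.ofReal c * ∫⁻ x, f (c * x) := by
  rw [← lintegral_map hf (measurable_const_mul c), Real.map_volume_mul_left hc.ne',
    lintegral_smul_measure, smul_eq_mul, ← mul_assoc, abs_of_pos (inv_pos.2 hc),
    ← ENNReal.ofReal_mul hc.le, mul_inv_cancel₀ hc.ne', ENNReal.ofReal_one, one_mul]

theorem lintegral_rpow_mul_one_sub_rpow {a b : ℝ} (ha : 0 < a) (hb : 0 < b) :
    ∫⁻ t in Ioo 0 1, ENNReal.ofReal (t ^ (a - 1) * (1 - t) ^ (b - 1)) =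
      ENNReal.ofReal (beta a b) := by
  have hB := beta_pos ha hb
  have h := lintegral_betaPDF_eq_one ha hb
  simp_rw [lintegral_betaPDF, mul_assoc, ENNReal.ofReal_mul (one_div_pos.2 hB).le] at h
  rw [lintegral_const_mul' _ _ ENNReal.ofReal_ne_top] at h
  rw [ENNReal.eq_inv_of_mul_eq_one_left (a := ∫⁻ t in Ioo 0 1, _) (by rwa [mul_comm] at h),
    one_div, ENNReal.ofReal_inv_of_pos hB, inv_inv]

theorem lintegral_rpow_mul_sub_rpow {a b c : ℝ} (ha : 0 < a) (hb : 0 < b) (hc : 0 < c) :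
    ∫⁻ t in Ioo 0 c, ENNReal.ofReal (t ^ (a - 1) * (c - t) ^ (b - 1)) =
      ENNReal.ofReal (c ^ (a + b - 1) * beta a b) := by
  set F : ℝ → ℝ → ℝ≥0∞ := fun c t => ENNReal.ofReal (t ^ (a - 1) * (c - t) ^ (b - 1))
  have hscale : ∀ u, (Ioo 0 c).indicator (F c) (c * u) =
      ENNReal.ofReal (c ^ (a + b - 2)) * (Ioo (0 : ℝ) 1).indicator (F 1) u := by
    intro u
    by_cases hu : u ∈ Ioo (0 : ℝ) 1
    · have hcu : c * u ∈ Ioo 0 c := ⟨mul_pos hc hu.1, by nlinarith [hu.2]⟩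
      rw [indicator_of_mem hcu, indicator_of_mem hu, ← ENNReal.ofReal_mul (by positivity)]
      show ENNReal.ofReal ((c * u) ^ (a - 1) * (c - c * u) ^ (b - 1)) = _
      congr 1
      rw [← mul_one_sub, mul_rpow hc.le hu.1.le, mul_rpow hc.le (by linarith [hu.2]),
        show a + b - 2 = (a - 1) + (b - 1) by ring, rpow_add hc]
      ring
    · have hcu : c * u ∉ Ioo 0 c := fun h =>
        hu ⟨pos_of_mul_pos_right h.1 hc.le, (mul_lt_iff_lt_one_right hc).1 h.2⟩
      rw [indicator_of_notMem hcu, indicator_of_notMem hu, mul_zero]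
  have hmeas : Measurable ((Ioo 0 c).indicator (F c)) :=
    Measurable.indicator (by fun_prop) measurableSet_Ioo
  rw [← lintegral_indicator measurableSet_Ioo, lintegral_eq_mul_lintegral_comp_mul_left hmeas hc,
    lintegral_congr hscale, lintegral_const_mul' _ _ ENNReal.ofReal_ne_top,
    lintegral_indicator measurableSet_Ioo, lintegral_rpow_mul_one_sub_rpow ha hb,
    ← ENNReal.ofReal_mul (by positivity), ← ENNReal.ofReal_mul hc.le, ← mul_assoc]
  rw [show a + b - 1 = 1 + (a + b - 2) by ring, rpow_add hc, rpow_one]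

theorem lintegral_fin_succ {n : ℕ} {f : (Fin (n + 1) → ℝ) → ℝ≥0∞} (hf : Measurable f) :
    ∫⁻ x, f x = ∫⁻ t, ∫⁻ y, f (Fin.cons t y) := by
  have he := (volume_preserving_piFinSuccAbove (fun _ : Fin (n + 1) => ℝ) 0).symm
  rw [← he.lintegral_comp_emb (MeasurableEquiv.measurableEmbedding _), Measure.volume_eq_prod]
  refine (lintegral_prod _ (hf.comp (MeasurableEquiv.measurable _)).aemeasurable).trans ?_
  simp [MeasurableEquiv.piFinSuccAbove_symm_apply, Fin.insertNthEquiv, Fin.insertNth_zero']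

theorem ae_linearMap_apply_ne {E : Type*} [NormedAddCommGroup E] [NormedSpace ℝ E]
    [MeasurableSpace E] [BorelSpace E] [FiniteDimensional ℝ E] (μ : Measure E) [μ.IsAddHaarMeasure]
    {L : E →ₗ[ℝ] ℝ} (hL : L ≠ 0) (c : ℝ) : ∀ᵐ x ∂μ, L x ≠ c := by
  rw [ae_iff]
  simp only [not_not]
  rcases eq_empty_or_nonempty {x | L x = c} with h | ⟨p, hp⟩
  · rw [h, measure_empty]
  have hker : {x | L x = c} = AffineSubspace.mk' p (LinearMap.ker L) := by
    ext x
    simp [AffineSubspace.mem_mk', sub_eq_zero, hp.out]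
  rw [hker]
  refine Measure.addHaar_affineSubspace μ _ fun htop => hL ?_
  rw [← LinearMap.ker_eq_top, ← AffineSubspace.direction_mk' p (LinearMap.ker L), htop,
    AffineSubspace.direction_top]

section MultiBeta

variable {ι : Type*} [Fintype ι]

noncomputable def multiBeta (a : ι → ℝ) : ℝ :=
  (∏ i, Gamma (a i)) / Gamma (∑ i, a i)

noncomputable def dirichletWeight (a p : ι → ℝ) : ℝ :=
  ∏ i, p i ^ (a i - 1)

theorem multiBeta_pos [Nonempty ι] {a : ι → ℝ} (ha : ∀ i, 0 < a i) : 0 < multiBeta a :=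
  div_pos (prod_pos fun i _ => Gamma_pos_of_pos (ha i))
    (Gamma_pos_of_pos (sum_pos (fun i _ => ha i) univ_nonempty))

theorem dirichletWeight_nonneg (a : ι → ℝ) {p : ι → ℝ} (hp : ∀ i, 0 ≤ p i) :
    0 ≤ dirichletWeight a p :=
  prod_nonneg fun i _ => rpow_nonneg (hp i) _

theorem measurable_dirichletWeight (a : ι → ℝ) : Measurable (dirichletWeight a) := by
  unfold dirichletWeight; fun_prop

theorem log_dirichletWeight (a : ι → ℝ) {p : ι → ℝ} (hp : ∀ i, 0 < p i) :
    log (dirichletWeight a p) = ∑ i, (a i - 1) * log (p i) := by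
  rw [dirichletWeight, log_prod fun i _ => (rpow_pos_of_pos (hp i) _).ne']
  exact sum_congr rfl fun i _ => log_rpow (hp i) _

variable [DecidableEq ι]

theorem multiBeta_update (a : ι → ℝ) (k : ι) (b : ℝ) :
    multiBeta (Function.update a k b) =
      Gamma b * (∏ j ∈ univ.erase k, Gamma (a j)) / Gamma (b + ∑ j ∈ univ.erase k, a j) := by
  have hne : ∀ j ∈ univ.erase k, Function.update a k b j = a j := fun j hj =>
    Function.update_of_ne (ne_of_mem_erase hj) _ _
  rw [multiBeta, ← mul_prod_erase _ _ (mem_univ k), ← add_sum_erase _ _ (mem_univ k),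
    Function.update_self, prod_congr rfl fun j hj => by rw [hne j hj], sum_congr rfl hne]

theorem hasDerivAt_multiBeta_update {a : ι → ℝ} (ha : ∀ i, 0 < a i) (k : ι) :
    HasDerivAt (fun b => multiBeta (Function.update a k b))
      (multiBeta a * (digamma (a k) - digamma (∑ i, a i))) (a k) := by
  set R := ∏ j ∈ univ.erase k, Gamma (a j)
  set t := ∑ j ∈ univ.erase k, a j
  have ht : 0 ≤ t := sum_nonneg fun j _ => (ha j).le
  have hsum : ∑ i, a i = a k + t := (add_sum_erase _ _ (mem_univ k)).symm
  have hΓ : 0 < Gamma (a k + t) := Gamma_pos_of_pos (by linarith [ha k])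
  have hB : multiBeta a = Gamma (a k) * R / Gamma (a k + t) := by
    rw [← multiBeta_update a k (a k), Function.update_eq_self]
  simp_rw [multiBeta_update a k]
  refine (((hasDerivAt_Gamma_mul_digamma (ha k)).mul_const R).div
    ((hasDerivAt_Gamma_mul_digamma (by linarith [ha k])).comp_add_const (a k) t)
      hΓ.ne').congr_deriv ?_
  rw [hB, hsum]
  field_simp

theorem dirichletWeight_update (a p : ι → ℝ) (k : ι) (b : ℝ) :
    dirichletWeight (Function.update a k b) p =
      p k ^ (b - 1) * ∏ j ∈ univ.erase k, p j ^ (a j - 1) := by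
  rw [dirichletWeight, ← mul_prod_erase _ _ (mem_univ k), Function.update_self]
  congr 1
  exact prod_congr rfl fun j hj => by rw [Function.update_of_ne (ne_of_mem_erase hj)]

theorem hasDerivAt_dirichletWeight_update (a : ι → ℝ) {p : ι → ℝ} {k : ι} (hp : 0 < p k)
    (b : ℝ) :
    HasDerivAt (fun b => dirichletWeight (Function.update a k b) p)
      (dirichletWeight (Function.update a k b) p * log (p k)) b := by
  simp_rw [dirichletWeight_update]
  exact (((hasStrictDerivAt_const_rpow hp (b - 1)).hasDerivAt.comp_sub_const b 1).mul_const
    _).congr_deriv (by ring)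

theorem abs_dirichletWeight_update_mul_log_le (a : ι → ℝ) {p : ι → ℝ} {k : ι}
    (hp : ∀ i, 0 ≤ p i) (hpk0 : 0 < p k) (hpk1 : p k ≤ 1) {b e ε : ℝ} (hε : 0 < ε) (h : e + ε ≤ b) :
    |dirichletWeight (Function.update a k b) p * log (p k)| ≤
      ε⁻¹ * dirichletWeight (Function.update a k e) p := by
  have hR : 0 ≤ ∏ j ∈ univ.erase k, p j ^ (a j - 1) :=
    prod_nonneg fun j _ => rpow_nonneg (hp j) _
  rw [dirichletWeight_update, dirichletWeight_update, abs_mul, abs_mul,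
    abs_of_nonneg (rpow_nonneg hpk0.le _), abs_of_nonneg hR]
  calc p k ^ (b - 1) * (∏ j ∈ univ.erase k, p j ^ (a j - 1)) * |log (p k)|
      = (p k ^ (b - 1) * |log (p k)|) * ∏ j ∈ univ.erase k, p j ^ (a j - 1) := by ring
    _ ≤ (ε⁻¹ * p k ^ (e - 1)) * ∏ j ∈ univ.erase k, p j ^ (a j - 1) :=
        mul_le_mul_of_nonneg_right (rpow_mul_abs_log_le hpk0 hpk1 hε (by linarith)) hR
    _ = ε⁻¹ * (p k ^ (e - 1) * ∏ j ∈ univ.erase k, p j ^ (a j - 1)) := by ring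

end MultiBeta

theorem multiBeta_succ {n : ℕ} {a : Fin (n + 2) → ℝ} (ha : ∀ i, 0 < a i) :
    multiBeta a = beta (a 0) (∑ i, Fin.tail a i) * multiBeta (Fin.tail a) := by
  have hs : 0 < Gamma (∑ i, Fin.tail a i) :=
    Gamma_pos_of_pos (sum_pos (fun i _ => ha _) univ_nonempty)
  rw [multiBeta, multiBeta, beta, Fin.prod_univ_succ, Fin.sum_univ_succ]
  simp only [Fin.tail] at hs ⊢
  field_simp

theorem dirichletWeight_cons {n : ℕ} (a : Fin (n + 1) → ℝ) (t : ℝ) (p : Fin n → ℝ) :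
    dirichletWeight a (Fin.cons t p) = t ^ (a 0 - 1) * dirichletWeight (Fin.tail a) p := by
  simp [dirichletWeight, Fin.prod_univ_succ, Fin.tail]

def scaledSimplex (n : ℕ) (c : ℝ) : Set (Fin n → ℝ) :=
  {y | (∀ i, 0 ≤ y i) ∧ ∑ i, y i ≤ c}

noncomputable def simplexPoint (n : ℕ) (c : ℝ) (y : Fin n → ℝ) : Fin (n + 1) → ℝ :=
  Fin.snoc y (c - ∑ i, y i)

theorem simplexPoint_castSucc (n : ℕ) (c : ℝ) (y : Fin n → ℝ) (i : Fin n) :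
    simplexPoint n c y i.castSucc = y i :=
  Fin.snoc_castSucc ..

theorem simplexPoint_last (n : ℕ) (c : ℝ) (y : Fin n → ℝ) :
    simplexPoint n c y (Fin.last n) = c - ∑ i, y i :=
  Fin.snoc_last ..

theorem simplexPoint_cons (n : ℕ) (c t : ℝ) (y : Fin n → ℝ) :
    simplexPoint (n + 1) c (Fin.cons t y) = Fin.cons t (simplexPoint n (c - t) y) := by
  rw [simplexPoint, simplexPoint, Fin.cons_snoc_eq_snoc_cons, Fin.sum_cons, sub_sub]

theorem measurable_simplexPoint (n : ℕ) (c : ℝ) : Measurable (simplexPoint n c) := by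
  refine measurable_pi_iff.2 fun k => ?_
  induction k using Fin.lastCases with
  | last => simp only [simplexPoint_last]; fun_prop
  | cast i => simp only [simplexPoint_castSucc]; fun_prop

theorem simplexPoint_nonneg {n : ℕ} {c : ℝ} {y : Fin n → ℝ} (hy : y ∈ scaledSimplex n c)
    (k : Fin (n + 1)) : 0 ≤ simplexPoint n c y k := by
  induction k using Fin.lastCases with
  | last => rw [simplexPoint_last]; linarith [hy.2]
  | cast i => rw [simplexPoint_castSucc]; exact hy.1 i

theorem simplexPoint_le {n : ℕ} {c : ℝ} {y : Fin n → ℝ} (hy : y ∈ scaledSimplex n c)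
    (k : Fin (n + 1)) : simplexPoint n c y k ≤ c := by
  have hsum : 0 ≤ ∑ i, y i := sum_nonneg fun i _ => hy.1 i
  induction k using Fin.lastCases with
  | last => rw [simplexPoint_last]; linarith
  | cast i =>
    rw [simplexPoint_castSucc]
    exact (single_le_sum (fun i _ => hy.1 i) (mem_univ i)).trans hy.2

theorem measurableSet_scaledSimplex (n : ℕ) (c : ℝ) : MeasurableSet (scaledSimplex n c) := by
  have : scaledSimplex n c = (⋂ i, {y | 0 ≤ y i}) ∩ {y | ∑ i, y i ≤ c} := by
    ext y; simp [scaledSimplex]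
  rw [this]
  exact (MeasurableSet.iInter fun i => measurableSet_le (by fun_prop) (by fun_prop)).inter
    (measurableSet_le (by fun_prop) (by fun_prop))

theorem cons_mem_scaledSimplex {n : ℕ} {c t : ℝ} {y : Fin n → ℝ} :
    Fin.cons t y ∈ scaledSimplex (n + 1) c ↔ 0 ≤ t ∧ y ∈ scaledSimplex n (c - t) := by
  simp only [scaledSimplex, mem_ofPred_eq, Fin.forall_fin_succ, Fin.cons_zero, Fin.cons_succ,
    Fin.sum_cons]
  constructor
  · rintro ⟨⟨ht, hy⟩, hs⟩; exact ⟨ht, hy, by linarith⟩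
  · rintro ⟨ht, hy, hs⟩; exact ⟨⟨ht, hy⟩, by linarith⟩

theorem scaledSimplex_zero {c : ℝ} (hc : 0 ≤ c) : scaledSimplex 0 c = univ := by
  ext y; simp [scaledSimplex, hc]

theorem ae_simplexPoint_ne_zero (n : ℕ) {c : ℝ} (hc : c ≠ 0) :
    ∀ᵐ y : Fin n → ℝ, ∀ k, simplexPoint n c y k ≠ 0 := by
  refine ae_all_iff.2 fun k => ?_
  induction k using Fin.lastCases with
  | cast i =>
    simp only [simplexPoint_castSucc]
    refine ae_linearMap_apply_ne volume
      (L := LinearMap.proj (R := ℝ) (φ := fun _ : Fin n => ℝ) i) (fun h => ?_) 0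
    simpa using LinearMap.congr_fun h (Pi.single i 1)
  | last =>
    simp only [simplexPoint_last, sub_ne_zero, ne_comm (a := c)]
    let L : (Fin n → ℝ) →ₗ[ℝ] ℝ := ∑ i, LinearMap.proj i
    have hL : ∀ y, L y = ∑ i, y i := fun y => by simp [L]
    by_cases h : L = 0
    · exact Filter.Eventually.of_forall fun y => by simp [← hL, h, Ne.symm hc]
    · simpa only [hL] using ae_linearMap_apply_ne volume h c

theorem ae_restrict_simplexPoint_mem_Ioc (n : ℕ) {c : ℝ} (hc : c ≠ 0) :
    ∀ᵐ y ∂(volume.restrict (scaledSimplex n c)), ∀ k, simplexPoint n c y k ∈ Ioc 0 c := by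
  filter_upwards [ae_restrict_mem (measurableSet_scaledSimplex n c),
    ae_restrict_of_ae (ae_simplexPoint_ne_zero n hc)] with y hy hy0 k
  exact ⟨(simplexPoint_nonneg hy k).lt_of_ne (hy0 k).symm, simplexPoint_le hy k⟩

theorem measurable_dirichletWeight_simplexPoint {n : ℕ} (a : Fin (n + 1) → ℝ) (c : ℝ) :
    Measurable fun y => dirichletWeight a (simplexPoint n c y) :=
  (measurable_dirichletWeight a).comp (measurable_simplexPoint n c)

theorem indicator_dirichletWeight_cons {n : ℕ} (a : Fin (n + 2) → ℝ) (c t : ℝ)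
    (z : Fin n → ℝ) :
    (scaledSimplex (n + 1) c).indicator
        (fun y => ENNReal.ofReal (dirichletWeight a (simplexPoint (n + 1) c y))) (Fin.cons t z) =
      (Icc 0 c).indicator (fun t => ENNReal.ofReal (t ^ (a 0 - 1))) t *
        (scaledSimplex n (c - t)).indicator
          (fun z => ENNReal.ofReal (dirichletWeight (Fin.tail a) (simplexPoint n (c - t) z))) z := by
  by_cases ht : t ∈ Icc 0 c
  · rw [indicator_of_mem ht]
    by_cases hz : z ∈ scaledSimplex n (c - t)
    · rw [indicator_of_mem (cons_mem_scaledSimplex.2 ⟨ht.1, hz⟩), indicator_of_mem hz,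
        simplexPoint_cons, dirichletWeight_cons, ENNReal.ofReal_mul (rpow_nonneg ht.1 _)]
    · rw [indicator_of_notMem (fun h => hz (cons_mem_scaledSimplex.1 h).2),
        indicator_of_notMem hz, mul_zero]
  · rw [indicator_of_notMem ht, zero_mul, indicator_of_notMem]
    intro h
    obtain ⟨ht0, hz⟩ := cons_mem_scaledSimplex.1 h
    have : 0 ≤ c - t := (sum_nonneg fun i _ => hz.1 i).trans hz.2
    exact ht ⟨ht0, by linarith⟩

theorem lintegral_dirichletWeight (n : ℕ) {c : ℝ} (hc : 0 < c) {a : Fin (n + 1) → ℝ}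
    (ha : ∀ i, 0 < a i) :
    ∫⁻ y in scaledSimplex n c, ENNReal.ofReal (dirichletWeight a (simplexPoint n c y)) =
      ENNReal.ofReal (c ^ (∑ i, a i - 1) * multiBeta a) := by
  induction n generalizing c with
  | zero =>
    have ha0 : Gamma (a 0) ≠ 0 := (Gamma_pos_of_pos (ha 0)).ne'
    simp [scaledSimplex_zero hc.le, dirichletWeight, simplexPoint, multiBeta, ha0, Fin.snoc,
      volume_pi]
  | succ n ih =>
    set s := ∑ i, Fin.tail a i
    have hs : 0 < s := sum_pos (fun i _ => ha _) univ_nonempty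
    set J : ℝ → (Fin n → ℝ) → ℝ≥0∞ := fun t => (scaledSimplex n (c - t)).indicator
      fun z => ENNReal.ofReal (dirichletWeight (Fin.tail a) (simplexPoint n (c - t) z))
    have hJ : ∀ t ∈ Ioo 0 c, ∫⁻ z, J t z =
        ENNReal.ofReal ((c - t) ^ (s - 1)) * ENNReal.ofReal (multiBeta (Fin.tail a)) := by
      intro t ht
      rw [lintegral_indicator (measurableSet_scaledSimplex _ _),
        ih (a := Fin.tail a) (sub_pos.2 ht.2) (fun i => ha _),
        ENNReal.ofReal_mul (rpow_nonneg (sub_pos.2 ht.2).le _)]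
    calc ∫⁻ y in scaledSimplex (n + 1) c, ENNReal.ofReal (dirichletWeight a (simplexPoint _ c y))
        = ∫⁻ t, (Icc 0 c).indicator (fun t => ENNReal.ofReal (t ^ (a 0 - 1))) t *
            ∫⁻ z, J t z := by
          rw [← lintegral_indicator (measurableSet_scaledSimplex _ _), lintegral_fin_succ
            ((measurable_dirichletWeight_simplexPoint a c).ennreal_ofReal.indicator
              (measurableSet_scaledSimplex _ _))]
          simp_rw [indicator_dirichletWeight_cons, lintegral_const_mul _
            ((measurable_dirichletWeight_simplexPoint _ _).ennreal_ofReal.indicator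
              (measurableSet_scaledSimplex _ _))]
          rfl
      _ = ∫⁻ t in Ioo 0 c, ENNReal.ofReal (t ^ (a 0 - 1) * (c - t) ^ (s - 1)) *
            ENNReal.ofReal (multiBeta (Fin.tail a)) := by
          rw [← setLIntegral_eq_of_support_subset (s := Icc 0 c) (Function.support_subset_iff'.2
            fun t ht => by rw [indicator_of_notMem ht, zero_mul]),
            ← setLIntegral_congr Ioo_ae_eq_Icc]
          refine setLIntegral_congr_fun measurableSet_Ioo fun t ht => ?_
          rw [indicator_of_mem (Ioo_subset_Icc_self ht), hJ t ht, ← mul_assoc,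
            ← ENNReal.ofReal_mul (rpow_nonneg ht.1.le _)]
      _ = ENNReal.ofReal (c ^ (∑ i, a i - 1) * multiBeta a) := by
          rw [lintegral_mul_const' _ _ ENNReal.ofReal_ne_top,
            lintegral_rpow_mul_sub_rpow (ha 0) hs hc,
            ← ENNReal.ofReal_mul (mul_nonneg (rpow_nonneg hc.le _) (beta_pos (ha 0) hs).le),
            multiBeta_succ ha, Fin.sum_univ_succ]
          simp only [s, Fin.tail]
          ring_nf

theorem integrableOn_dirichletWeight (n : ℕ) {c : ℝ} (hc : 0 < c) {a : Fin (n + 1) → ℝ}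
    (ha : ∀ i, 0 < a i) :
    IntegrableOn (fun y => dirichletWeight a (simplexPoint n c y)) (scaledSimplex n c) := by
  refine (lintegral_ofReal_ne_top_iff_integrable ?_ ?_).1 ?_
  · exact (measurable_dirichletWeight_simplexPoint a c).aestronglyMeasurable
  · exact ae_restrict_of_forall_mem (measurableSet_scaledSimplex n c) fun y hy =>
      dirichletWeight_nonneg a (simplexPoint_nonneg hy)
  · rw [lintegral_dirichletWeight n hc ha]
    exact ENNReal.ofReal_ne_top

theorem integral_dirichletWeight (n : ℕ) {c : ℝ} (hc : 0 < c) {a : Fin (n + 1) → ℝ}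
    (ha : ∀ i, 0 < a i) :
    ∫ y in scaledSimplex n c, dirichletWeight a (simplexPoint n c y) =
      c ^ (∑ i, a i - 1) * multiBeta a := by
  rw [integral_eq_lintegral_of_nonneg_ae, lintegral_dirichletWeight n hc ha,
    ENNReal.toReal_ofReal (mul_nonneg (rpow_nonneg hc.le _) (multiBeta_pos ha).le)]
  · exact ae_restrict_of_forall_mem (measurableSet_scaledSimplex n c) fun y hy =>
      dirichletWeight_nonneg a (simplexPoint_nonneg hy)
  · exact (measurable_dirichletWeight_simplexPoint a c).aestronglyMeasurable

theorem integral_dirichletWeight_mul_log (n : ℕ) {a : Fin (n + 1) → ℝ} (ha : ∀ i, 0 < a i)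
    (k : Fin (n + 1)) :
    IntegrableOn (fun y => dirichletWeight a (simplexPoint n 1 y) * log (simplexPoint n 1 y k))
        (scaledSimplex n 1) ∧
      ∫ y in scaledSimplex n 1, dirichletWeight a (simplexPoint n 1 y) *
          log (simplexPoint n 1 y k) =
        multiBeta a * (digamma (a k) - digamma (∑ i, a i)) := by
  set ε := a k / 4 with hε_def
  have hε : 0 < ε := div_pos (ha k) four_pos
  have hupd : ∀ b, 0 < b → ∀ i, 0 < Function.update a k b i := fun b hb i => by
    rcases eq_or_ne i k with rfl | h
    · simpa using hb
    · simpa [Function.update_of_ne h] using ha i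
  have hmem := ae_restrict_simplexPoint_mem_Ioc n one_ne_zero
  obtain ⟨hint, hderiv⟩ := hasDerivAt_integral_of_dominated_loc_of_deriv_le
    (F := fun b y => dirichletWeight (Function.update a k b) (simplexPoint n 1 y))
    (F' := fun b y => dirichletWeight (Function.update a k b) (simplexPoint n 1 y) *
      log (simplexPoint n 1 y k))
    (bound := fun y => ε⁻¹ * dirichletWeight (Function.update a k (a k / 2)) (simplexPoint n 1 y))
    (Metric.ball_mem_nhds (a k) hε)
    (Filter.Eventually.of_forall fun b =>
      (measurable_dirichletWeight_simplexPoint _ 1).aestronglyMeasurable)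
    (by rw [Function.update_eq_self]; exact integrableOn_dirichletWeight n one_pos ha)
    ((measurable_dirichletWeight_simplexPoint _ 1).mul
      ((measurable_pi_apply k).comp (measurable_simplexPoint n 1)).log).aestronglyMeasurable
    (by
      filter_upwards [hmem] with y hy b hb
      have hb' := (abs_lt.1 (Metric.mem_ball.1 hb)).1
      exact abs_dirichletWeight_update_mul_log_le a (fun i => (hy i).1.le) (hy k).1 (hy k).2 hε
        (by linarith))
    ((integrableOn_dirichletWeight n one_pos (hupd _ (half_pos (ha k)))).const_mul _)
    (by
      filter_upwards [hmem] with y hy b _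
      exact hasDerivAt_dirichletWeight_update a (hy k).1 b)
  have hB : (fun b => ∫ y in scaledSimplex n 1, dirichletWeight (Function.update a k b)
      (simplexPoint n 1 y)) =ᶠ[nhds (a k)] fun b => multiBeta (Function.update a k b) := by
    filter_upwards [lt_mem_nhds (ha k)] with b hb
    rw [integral_dirichletWeight n one_pos (hupd b hb), one_rpow, one_mul]
  simp only [Function.update_eq_self] at hint hderiv
  exact ⟨hint, hderiv.unique ((hasDerivAt_multiBeta_update ha k).congr_of_eventuallyEq hB)⟩

theorem dirDensity_succ (n : ℕ) (α : Fin (n + 1) → ℝ) (x : Fin n → ℝ) :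
    dirDensity (n + 1) α x = (multiBeta α)⁻¹ * dirichletWeight α (simplexPoint n 1 x) := by
  rw [dirDensity, multiBeta, inv_div]
  rfl

theorem dirDensity_one (n : ℕ) (x : Fin n → ℝ) :
    dirDensity (n + 1) (fun _ => 1) x = Gamma ((n + 1 : ℕ) : ℝ) := by
  simp [dirDensity]

theorem integrableOn_dirDensity (n : ℕ) {α : Fin (n + 1) → ℝ} (hα : ∀ k, 0 < α k) :
    IntegrableOn (dirDensity (n + 1) α) (simplexDomain (n + 1)) := by
  simp_rw [funext (dirDensity_succ n α)]
  exact (integrableOn_dirichletWeight n one_pos hα).const_mul _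

theorem integral_dirDensity (n : ℕ) {α : Fin (n + 1) → ℝ} (hα : ∀ k, 0 < α k) :
    ∫ x in simplexDomain (n + 1), dirDensity (n + 1) α x = 1 := by
  calc ∫ x in simplexDomain (n + 1), dirDensity (n + 1) α x
      = (multiBeta α)⁻¹ * ∫ y in scaledSimplex n 1, dirichletWeight α (simplexPoint n 1 y) := by
        simp_rw [dirDensity_succ]; exact integral_const_mul _ _
    _ = 1 := by
        rw [integral_dirichletWeight n one_pos hα, one_rpow, one_mul,
          inv_mul_cancel₀ (multiBeta_pos hα).ne']

theorem integral_dirDensity_mul_log_dirMu (n : ℕ) {α : Fin (n + 1) → ℝ} (hα : ∀ k, 0 < α k)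
    (k : Fin (n + 1)) :
    IntegrableOn (fun x => dirDensity (n + 1) α x * log (dirMu (n + 1) k x))
        (simplexDomain (n + 1)) ∧
      ∫ x in simplexDomain (n + 1), dirDensity (n + 1) α x * log (dirMu (n + 1) k x) =
        digamma (α k) - digamma (∑ j, α j) := by
  obtain ⟨hint, hval⟩ := integral_dirichletWeight_mul_log n hα k
  simp_rw [dirDensity_succ, mul_assoc]
  refine ⟨hint.const_mul _, ?_⟩
  calc ∫ x in simplexDomain (n + 1), (multiBeta α)⁻¹ *
        (dirichletWeight α (simplexPoint n 1 x) * log (dirMu (n + 1) k x))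
      = (multiBeta α)⁻¹ * ∫ y in scaledSimplex n 1,
          dirichletWeight α (simplexPoint n 1 y) * log (simplexPoint n 1 y k) :=
        integral_const_mul _ _
    _ = digamma (α k) - digamma (∑ j, α j) := by
        rw [hval, ← mul_assoc, inv_mul_cancel₀ (multiBeta_pos hα).ne', one_mul]

theorem log_dirDensity_div_dirDensity_one {n : ℕ} {α : Fin (n + 1) → ℝ} (hα : ∀ k, 0 < α k)
    {x : Fin n → ℝ} (hx : ∀ k, 0 < dirMu (n + 1) k x) :
    log (dirDensity (n + 1) α x / dirDensity (n + 1) (fun _ => 1) x) =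
      log (Gamma (∑ k, α k) / (Gamma ((n + 1 : ℕ) : ℝ) * ∏ k, Gamma (α k))) +
        ∑ k, (α k - 1) * log (dirMu (n + 1) k x) := by
  have hΓ : 0 < Gamma ((n + 1 : ℕ) : ℝ) := Gamma_pos_of_pos (by positivity)
  have hW : 0 < dirichletWeight α (simplexPoint n 1 x) :=
    prod_pos fun k _ => rpow_pos_of_pos (hx k) _
  rw [dirDensity_succ, dirDensity_one, mul_div_right_comm,
    log_mul (div_pos (inv_pos.2 (multiBeta_pos hα)) hΓ).ne' hW.ne',
    log_dirichletWeight α (p := simplexPoint n 1 x) hx]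
  congr 2
  rw [multiBeta, inv_div, div_div, mul_comm]

/-- Equation 8: the KL divergence from `Dir(α)` to the uniform Dirichlet
`Dir(1, …, 1)` equals
`log (Γ(∑_k α k) / (Γ(K) ∏_k Γ(α k))) + ∑_k (α k − 1) (ψ(α k) − ψ(∑_j α j))`. -/
theorem dirichlet_kl_to_uniform (K : ℕ) (hK : 2 ≤ K)
    (α : Fin K → ℝ) (hα : ∀ k, 0 < α k) :
    ∫ x in simplexDomain K,
        dirDensity K α x * Real.log (dirDensity K α x / dirDensity K (fun _ => 1) x) =
      Real.log (Real.Gamma (∑ k, α k) / (Real.Gamma K * ∏ k, Real.Gamma (α k))) +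
        ∑ k, (α k - 1) * (digamma (α k) - digamma (∑ j, α j)) := by
  obtain ⟨n, rfl⟩ : ∃ n, K = n + 1 := ⟨K - 1, by omega⟩
  set L := log (Gamma (∑ k, α k) / (Gamma ((n + 1 : ℕ) : ℝ) * ∏ k, Gamma (α k)))
  have hlog := integral_dirDensity_mul_log_dirMu n hα
  have hae : ∀ᵐ x ∂(volume.restrict (simplexDomain (n + 1))),
      dirDensity (n + 1) α x *
          log (dirDensity (n + 1) α x / dirDensity (n + 1) (fun _ => 1) x) =
        L * dirDensity (n + 1) α x +
          ∑ k, (α k - 1) * (dirDensity (n + 1) α x * log (dirMu (n + 1) k x)) := by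
    filter_upwards [ae_restrict_simplexPoint_mem_Ioc n one_ne_zero] with x hx
    rw [log_dirDensity_div_dirDensity_one hα fun k => (hx k).1, mul_add, mul_sum]
    congr 1 <;> [ring; exact sum_congr rfl fun k _ => by ring]
  rw [integral_congr_ae hae, integral_add, integral_const_mul, integral_dirDensity n hα,
    mul_one, integral_finsetSum]
  · simp_rw [integral_const_mul, (hlog _).2]
  · exact fun k _ => (hlog k).1.const_mul _
  · exact (integrableOn_dirDensity n hα).const_mul _
  · exact integrable_finsetSum _ fun k _ => (hlog k).1.const_mul _
end
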